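/- arXiv:2502.20164 — 7 statements merged into one kernel-verified Lean document; each statement's English description precedes it below -/
import Mathlib

section
/- Let (X,d) be a metric space and n a positive integer. Let C_n(X) be the set of all nonempty subsets of X of cardinality at most n, and let p : X^n → C_n(X) be the surjection p(x_1,…,x_n) = {x_1,…,x_n}. Then the quotient topology on C_n(X) coinduced by p from the product topology on X^n coincides with the topology on C_n(X) induced by the Hausdorff metric d_H. -/
open Set Topology

/-- The configuration space of at most `n` points: nonempty subsets of `X`
of cardinality at most `n`. -/
def AtMostN (X : Type*) (n : ℕ) : Type _ :=
  {S : Set X // S.Nonempty ∧ S.Finite ∧ S.ncard ≤ n}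

/-- The map sending an `n`-tuple to the set of its coordinates. -/
def tupleToSet {X : Type*} {n : ℕ} (hn : 0 < n) (x : Fin n → X) : AtMostN X n :=
  ⟨Set.range x, ⟨x ⟨0, hn⟩, Set.mem_range_self _⟩, Set.finite_range x, by
    rw [← Set.image_univ]
    calc (x '' Set.univ).ncard ≤ (Set.univ : Set (Fin n)).ncard :=
          Set.ncard_image_le Set.finite_univ
      _ = n := by simp [Set.ncard_univ]⟩

/-- The quotient topology on `AtMostN X n` coinduced from the product topology on `X^n`. -/
def quotTopology (X : Type*) [TopologicalSpace X] {n : ℕ} (hn : 0 < n) :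
    TopologicalSpace (AtMostN X n) :=
  TopologicalSpace.coinduced (tupleToSet hn) inferInstance

/-- Finite nonempty sets as nonempty compact sets, for the Hausdorff metric. -/
def toNonemptyCompacts {X : Type*} [MetricSpace X] {n : ℕ} (A : AtMostN X n) :
    TopologicalSpace.NonemptyCompacts X :=
  ⟨⟨A.1, A.2.2.1.isCompact⟩, A.2.1⟩

/-- The topology of the Hausdorff metric on `AtMostN X n`: the topology induced
by the Hausdorff metric on nonempty compact (in particular, finite) subsets. -/
def hausdorffTopology (X : Type*) [MetricSpace X] (n : ℕ) :
    TopologicalSpace (AtMostN X n) :=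
  TopologicalSpace.induced toNonemptyCompacts inferInstance

/-!
The map `x ↦ {x₁, …, xₙ}` is `1`-Lipschitz from the sup metric to the Hausdorff metric, so the
quotient topology is finer. Conversely, if `p⁻¹ U` is open and `A ∈ U`, the fibre `p⁻¹ {A}` is
finite, hence has a uniform `δ`-neighbourhood inside `p⁻¹ U`. If `B` is Hausdorff-closer to `A`
than `δ` and than half the minimal distance between points of `A`, then sending each point of an
enumeration of `B` to a nearby point of `A` yields an enumeration of `A`, so `B ∈ U`.
-/

open Metric

theorem tupleToSet_surjective {X : Type*} {n : ℕ} (hn : 0 < n) :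
    Function.Surjective (tupleToSet (X := X) hn) := by
  rintro ⟨S, hne, hfin, hcard⟩
  have : Nonempty S := hne.to_subtype
  have : Finite S := hfin
  let e : S ↪ Fin n := (Finite.equivFin S).toEmbedding.trans
    (Fin.castLEEmb (by rwa [Nat.card_coe_set_eq]))
  refine ⟨Subtype.val ∘ Function.invFun e, Subtype.ext ?_⟩
  change range (Subtype.val ∘ Function.invFun e) = S
  rw [(Function.invFun_surjective e.injective).range_comp, Subtype.range_val]

theorem finite_preimage_tupleToSet_singleton {X : Type*} {n : ℕ} (hn : 0 < n) (A : AtMostN X n) :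
    (tupleToSet hn ⁻¹' {A}).Finite :=
  (Set.Finite.pi fun _ => A.2.2.1).subset fun x hx i _ => by
    rw [← congrArg Subtype.val (mem_singleton_iff.1 hx)]
    exact mem_range_self i

theorem Set.Finite.exists_pos_forall_dist_lt_imp_eq {X : Type*} [MetricSpace X] {S : Set X}
    (hS : S.Finite) : ∃ r > 0, ∀ a ∈ S, ∀ b ∈ S, dist a b < r → a = b := by
  have hnear : ∀ᶠ r in 𝓝 (0 : ℝ), ∀ p ∈ S.offDiag, r < dist p.1 p.2 :=
    (Filter.eventually_all_finite hS.offDiag).2 fun p hp =>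
      eventually_lt_nhds (dist_pos.2 hp.2.2)
  obtain ⟨r, hlt, hr⟩ :=
    ((hnear.filter_mono nhdsWithin_le_nhds).and (self_mem_nhdsWithin (s := Ioi 0))).exists
  refine ⟨r, hr, fun a ha b hb hab => ?_⟩
  by_contra hne
  exact (hlt (a, b) ⟨ha, hb, hne⟩).not_gt hab

-- Move each `y i` to an `ε`-close point of `A`; the separation of `A` makes this onto.
theorem exists_range_eq_forall_dist_lt {X ι : Type*} [MetricSpace X] {A : Set X} {y : ι → X}
    {ε : ℝ} (hA : ∀ a ∈ A, ∀ b ∈ A, dist a b < 2 * ε → a = b)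
    (hyA : ∀ i, ∃ a ∈ A, dist (y i) a < ε) (hAy : ∀ a ∈ A, ∃ i, dist a (y i) < ε) :
    ∃ x : ι → X, range x = A ∧ ∀ i, dist (y i) (x i) < ε := by
  choose x hxA hxy using hyA
  refine ⟨x, (range_subset_iff.2 hxA).antisymm fun a ha => ?_, hxy⟩
  obtain ⟨i, hai⟩ := hAy a ha
  refine ⟨i, (hA a ha (x i) (hxA i) ?_).symm⟩
  calc dist a (x i) ≤ dist a (y i) + dist (y i) (x i) := dist_triangle _ _ _
    _ < 2 * ε := by linarith [hxy i]

section

variable {X : Type*} [MetricSpace X] {n : ℕ} (hn : 0 < n)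

theorem lipschitzWith_toNonemptyCompacts_comp_tupleToSet :
    LipschitzWith 1 (toNonemptyCompacts ∘ tupleToSet (X := X) hn) :=
  LipschitzWith.of_dist_le_mul fun x y => by
    rw [NNReal.coe_one, one_mul, NonemptyCompacts.dist_eq]
    refine hausdorffDist_le_of_mem_dist dist_nonneg ?_ ?_
    · rintro _ ⟨i, rfl⟩
      exact ⟨y i, mem_range_self i, dist_le_pi_dist x y i⟩
    · rintro _ ⟨i, rfl⟩
      exact ⟨x i, mem_range_self i, dist_comm (y i) (x i) ▸ dist_le_pi_dist x y i⟩

theorem quotTopology_le_hausdorffTopology : quotTopology X hn ≤ hausdorffTopology X n := by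
  rw [quotTopology, hausdorffTopology, coinduced_le_iff_le_induced, induced_compose]
  exact continuous_iff_le_induced.mp
    (lipschitzWith_toNonemptyCompacts_comp_tupleToSet hn).continuous

theorem isOpen_hausdorffTopology_iff {U : Set (AtMostN X n)} :
    IsOpen[hausdorffTopology X n] U ↔ ∀ A ∈ U, ∃ ε > 0,
      ∀ B, dist (toNonemptyCompacts B) (toNonemptyCompacts A) < ε → B ∈ U := by
  rw [@isOpen_iff_mem_nhds _ (hausdorffTopology X n)]
  refine forall₂_congr fun A _ => ?_
  rw [hausdorffTopology, nhds_induced, (nhds_basis_ball.comap _).mem_iff]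
  rfl

theorem exists_forall_dist_lt_mem_of_isOpen_preimage {U : Set (AtMostN X n)}
    (hU : IsOpen (tupleToSet hn ⁻¹' U)) {A : AtMostN X n} (hA : A ∈ U) :
    ∃ ε > 0, ∀ B, dist (toNonemptyCompacts B) (toNonemptyCompacts A) < ε → B ∈ U := by
  obtain ⟨r, hr, hsep⟩ := A.2.2.1.exists_pos_forall_dist_lt_imp_eq
  obtain ⟨δ, hδ, hthick⟩ := (finite_preimage_tupleToSet_singleton hn A).isCompact
    |>.exists_thickening_subset_open hU (preimage_mono (singleton_subset_iff.2 hA))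
  refine ⟨min δ (r / 2), by positivity, fun B hB => ?_⟩
  have hfin : hausdorffEDist (toNonemptyCompacts B : Set X) (toNonemptyCompacts A) ≠ ⊤ :=
    hausdorffEDist_ne_top_of_nonempty_of_bounded B.2.1 A.2.1
      B.2.2.1.isBounded A.2.2.1.isBounded
  rw [NonemptyCompacts.dist_eq] at hB
  obtain ⟨y, rfl⟩ := tupleToSet_surjective hn B
  obtain ⟨x, hxA, hxy⟩ := exists_range_eq_forall_dist_lt (A := A.1) (y := y)
    (fun a ha b hb hab => hsep a ha b hb (by linarith [min_le_right δ (r / 2)]))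
    (fun i => exists_dist_lt_of_hausdorffDist_lt (mem_range_self i) hB hfin)
    (fun a ha => by
      obtain ⟨_, ⟨i, rfl⟩, hai⟩ := exists_dist_lt_of_hausdorffDist_lt' ha hB hfin
      exact ⟨i, dist_comm (y i) a ▸ hai⟩)
  refine hthick (mem_thickening_iff.2 ⟨x, Subtype.ext hxA, ?_⟩)
  exact (dist_pi_lt_iff hδ).2 fun i => (hxy i).trans_le (min_le_left _ _)

theorem hausdorffTopology_le_quotTopology : hausdorffTopology X n ≤ quotTopology X hn :=
  fun _ hU => isOpen_hausdorffTopology_iff.2 fun _ hA =>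
    exists_forall_dist_lt_mem_of_isOpen_preimage hn hU hA

end

/-- Theorem: for a metric space `X`, the quotient topology on the configuration
space `C_n(X)` of at most `n` points, coinduced from the product topology on
`X^n`, coincides with the topology induced by the Hausdorff metric. -/
theorem quotTopology_eq_hausdorffTopology
    {X : Type*} [MetricSpace X] (n : ℕ) (hn : 0 < n) :
    quotTopology X hn = hausdorffTopology X n :=
  (quotTopology_le_hausdorffTopology hn).antisymm (hausdorffTopology_le_quotTopology hn)
end

section
/- Let X be a connected topological space, Y a topological space with empty boundary in itself (Y is open and closed in Y), and let ψ = (n_ψ, w_ψ) be an ℕ-weighted map from X to Y. Then the function x ↦ Σ_{y∈Y} w_ψ(x,y) is constant on X; its common value I_w(ψ) is called the weighted index of ψ. -/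
open Set Topology

/-- An `ℕ`-weighted map from `X` to `Y`: an upper semicontinuous finite-valued
set-valued map `toFun` together with a weight function `weight` which is zero
off the graph, strictly positive on it, and whose local sums over open sets
whose boundary misses the values are locally constant. -/
structure NWeightedMap (X Y : Type*) [TopologicalSpace X] [TopologicalSpace Y] where
  toFun : X → Set Y
  weight : X → Y → ℕ
  usc : ∀ V : Set Y, IsOpen V → IsOpen {x | toFun x ⊆ V}
  finite_values : ∀ x, (toFun x).Finite
  weight_eq_zero : ∀ x y, y ∉ toFun x → weight x y = 0
  weight_pos : ∀ x y, y ∈ toFun x → 0 < weight x y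
  sum_locally_const : ∀ U : Set Y, IsOpen U → ∀ x : X, toFun x ∩ frontier U = ∅ →
    ∃ V : Set X, IsOpen V ∧ x ∈ V ∧
      ∀ z ∈ V, ∑ᶠ y ∈ U, weight x y = ∑ᶠ y ∈ U, weight z y

namespace NWeightedMap

variable {X Y : Type*} [TopologicalSpace X] [TopologicalSpace Y]

theorem isLocallyConstant_sum_weight (ψ : NWeightedMap X Y) :
    IsLocallyConstant fun x => ∑ᶠ y : Y, ψ.weight x y := by
  rw [IsLocallyConstant.iff_exists_open]
  intro x
  obtain ⟨V, hV, hxV, hsum⟩ :=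
    ψ.sum_locally_const univ isOpen_univ x (by rw [frontier_univ, inter_empty])
  refine ⟨V, hV, hxV, fun z hz => ?_⟩
  simpa only [finsum_mem_univ] using (hsum z hz).symm

end NWeightedMap

/-- Theorem: if `X` is connected then the total weight `x ↦ Σ_{y∈Y} w_ψ(x,y)`
of an `ℕ`-weighted map is constant on `X` (its common value is the weighted
index `I_w(ψ)`).  The boundary of `Y` in itself is automatically empty. -/
theorem NWeightedMap.total_weight_constant
    {X Y : Type*} [TopologicalSpace X] [TopologicalSpace Y] [ConnectedSpace X]
    (ψ : NWeightedMap X Y) :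
    ∀ x₁ x₂ : X, ∑ᶠ y : Y, ψ.weight x₁ y = ∑ᶠ y : Y, ψ.weight x₂ y :=
  ψ.isLocallyConstant_sum_weight.apply_eq_of_preconnectedSpace
end

section
/- Let X and Y be metric spaces and n a positive integer. Let f : X → Set Y be lower and upper semicontinuous with f(x) of cardinality exactly n for every x ∈ X. Let Γ = {(x,y) ∈ X × Y | y ∈ f(x)} with the subspace topology of the product, and let p : Γ → X be the projection p(x,y) = x. Then p is a covering map, and each fiber p^{-1}(x) has cardinality n. -/
/-! Separate the finitely many points of `f x₀` by disjoint open sets `V a`. By upper and lower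
semicontinuity, for `x` near `x₀` the set `f x` lies in `⋃ a, V a` and meets every `V a`; as `f x`
and `f x₀` have the same cardinality, it meets each `V a` in exactly one point. Over such a
neighbourhood the pieces `{(x, y) | y ∈ V a}` of the graph are the sheets of a trivialization: the
projection is injective on each of them, maps each onto the neighbourhood, and is an open map
because `f` is lower semicontinuous. -/

open Set Topology

/-- A set-valued function is lower semicontinuous if `{x | f x ∩ V ≠ ∅}` is open
for every open `V`. -/
def LowerSemicontinuousMultimap {X Y : Type*} [TopologicalSpace X] [TopologicalSpace Y]
    (f : X → Set Y) : Prop :=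
  ∀ V : Set Y, IsOpen V → IsOpen {x | (f x ∩ V).Nonempty}

/-- A set-valued function is upper semicontinuous if `{x | f x ⊆ V}` is open
for every open `V`. -/
def UpperSemicontinuousMultimap {X Y : Type*} [TopologicalSpace X] [TopologicalSpace Y]
    (f : X → Set Y) : Prop :=
  ∀ V : Set Y, IsOpen V → IsOpen {x | f x ⊆ V}

theorem Set.Finite.subsingleton_inter_of_ncard_le {α ι : Type*} {s : Set α} {t : Set ι}
    {V : ι → Set α} (hs : s.Finite) (hV : t.PairwiseDisjoint V)
    (hmeet : ∀ i ∈ t, (s ∩ V i).Nonempty) (hst : s.ncard ≤ t.ncard) {i : ι} (hi : i ∈ t) :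
    (s ∩ V i).Subsingleton := by
  have : Nonempty α := ⟨(hmeet i hi).some⟩
  choose! g hg using hmeet
  have hinj : InjOn g t := fun i hi j hj hij =>
    hV.elim hi hj (not_disjoint_iff.2 ⟨g i, (hg i hi).2, hij ▸ (hg j hj).2⟩)
  have himage : g '' t = s :=
    eq_of_subset_of_ncard_le (image_subset_iff.2 fun i hi => (hg i hi).1)
      (hinj.ncard_image ▸ hst) hs
  have hunique : ∀ z ∈ s ∩ V i, z = g i := by
    rintro z ⟨hzs, hzV⟩
    obtain ⟨j, hj, rfl⟩ := himage.symm ▸ hzs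
    rw [hV.elim hi hj (not_disjoint_iff.2 ⟨g j, hzV, (hg j hj).2⟩)]
  exact fun z₁ h₁ z₂ h₂ => (hunique z₁ h₁).trans (hunique z₂ h₂).symm

section

variable {X Y : Type*} {f : X → Set Y}

abbrev MultimapGraph (f : X → Set Y) : Type _ := {p : X × Y // p.2 ∈ f p.1}

abbrev MultimapGraph.fst (f : X → Set Y) (g : MultimapGraph f) : X := g.1.1

theorem MultimapGraph.ncard_fst_preimage_singleton (x : X) :
    (MultimapGraph.fst f ⁻¹' {x}).ncard = (f x).ncard :=
  ncard_congr (fun g _ => g.1.2) (fun g hg => (show g.1.1 = x from hg) ▸ g.2)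
    (fun g _ hg hg' h => Subtype.ext (Prod.ext ((show g.1.1 = x from hg).trans hg'.symm) h))
    (fun z hz => ⟨⟨(x, z), hz⟩, rfl, rfl⟩)

variable [TopologicalSpace X] [TopologicalSpace Y]

theorem LowerSemicontinuousMultimap.isOpenMap_fst (hf : LowerSemicontinuousMultimap f) :
    IsOpenMap (MultimapGraph.fst f) := by
  intro O hO
  obtain ⟨O', hO', rfl⟩ := isOpen_induced_iff.1 hO
  refine isOpen_iff_forall_mem_open.2 ?_
  rintro _ ⟨⟨⟨x, z⟩, hz⟩, hxz, rfl⟩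
  obtain ⟨N, B, hN, hB, hxN, hzB, hNB⟩ := isOpen_prod_iff.1 hO' x z hxz
  refine ⟨N ∩ {x' | (f x' ∩ B).Nonempty}, ?_, hN.inter (hf B hB), hxN, z, hz, hzB⟩
  rintro x' ⟨hx'N, z', hz'f, hz'B⟩
  exact ⟨⟨(x', z'), hz'f⟩, hNB (mk_mem_prod hx'N hz'B), rfl⟩

theorem eventually_subset_biUnion_and_inter_nonempty (hlsc : LowerSemicontinuousMultimap f)
    (husc : UpperSemicontinuousMultimap f) {x₀ : X} (hfin : (f x₀).Finite) {V : Y → Set Y}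
    (hV : ∀ y, y ∈ V y ∧ IsOpen (V y)) :
    ∀ᶠ x in 𝓝 x₀, f x ⊆ ⋃ a ∈ f x₀, V a ∧ ∀ a ∈ f x₀, (f x ∩ V a).Nonempty :=
  Filter.Eventually.and ((husc _ (isOpen_biUnion fun a _ => (hV a).2)).mem_nhds
      fun y hy => mem_biUnion hy (hV y).1) <|
    (Filter.eventually_all_finite hfin).2 fun a ha =>
      (hlsc _ (hV a).2).mem_nhds ⟨a, ha, (hV a).1⟩

theorem MultimapGraph.isEvenlyCovered_fst [T2Space Y] (hlsc : LowerSemicontinuousMultimap f)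
    (husc : UpperSemicontinuousMultimap f) (hfin : ∀ x, (f x).Finite) {n : ℕ}
    (hcard : ∀ x, (f x).ncard = n) (x₀ : X) :
    IsEvenlyCovered (MultimapGraph.fst f) x₀ (f x₀) := by
  have := (hfin x₀).to_subtype
  rcases isEmpty_or_nonempty (f x₀) with h₀ | h₀
  · have hempty : ∀ x, f x = ∅ := fun x =>
      (ncard_eq_zero (hfin x)).1 (by rw [hcard x, ← hcard x₀, isEmpty_coe_sort.1 h₀, ncard_empty])
    exact .of_preimage_eq_empty _ Filter.univ_mem (eq_empty_of_forall_notMem fun g _ => by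
      simpa [hempty] using g.2)
  have ⟨⟨a₀, ha₀⟩⟩ := h₀
  have : Nonempty (X → MultimapGraph f) := ⟨fun _ => ⟨(x₀, a₀), ha₀⟩⟩
  have hfst : Continuous (MultimapGraph.fst f) := by fun_prop
  obtain ⟨V, hV, hVdisj⟩ := (hfin x₀).t2_separation
  obtain ⟨U, hUsub, hU, hx₀U⟩ :=
    mem_nhds_iff.1 (eventually_subset_biUnion_and_inter_nonempty hlsc husc (hfin x₀) hV)
  let sheet (a : f x₀) : Set (MultimapGraph f) := {g | g.1.1 ∈ U ∧ g.1.2 ∈ V a}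
  have hsheet (a : f x₀) : IsOpen (sheet a) :=
    (hU.preimage hfst).inter ((hV a).2.preimage (by fun_prop))
  have hsurj (a : f x₀) : SurjOn (MultimapGraph.fst f) (sheet a) U := fun x hx =>
    have ⟨z, hzf, hzV⟩ := (hUsub hx).2 a a.2
    ⟨⟨(x, z), hzf⟩, ⟨hx, hzV⟩, rfl⟩
  refine .of_trivialization (t := hU.trivializationDiscrete sheet _
    (fun a W hWU => ⟨fun hW => (hW.preimage hfst).inter (hsheet a), fun hW => ?_⟩)
    (fun a g hg g' hg' hgg' => ?_) hsurj ?_ ?_) hx₀U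
  · rw [← inter_eq_left.2 (hWU.trans (hsurj a)), ← image_preimage_inter]
    exact hlsc.isOpenMap_fst _ hW
  · have hg'f : g'.1.2 ∈ f g.1.1 := (show g.1.1 = g'.1.1 from hgg') ▸ g'.2
    refine Subtype.ext (Prod.ext hgg' ?_)
    exact (hfin _).subsingleton_inter_of_ncard_le hVdisj (hUsub hg.1).2
      ((hcard _).trans (hcard x₀).symm).le a.2 ⟨g.2, hg.2⟩ ⟨hg'f, hg'.2⟩
  · exact fun a b hab => disjoint_iff_inf_le.2 fun g hg =>
      hab (Subtype.ext (hVdisj.elim a.2 b.2 (not_disjoint_iff.2 ⟨g.1.2, hg.1.2, hg.2.2⟩)))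
  · intro g hg
    obtain ⟨a, ha, hgV⟩ := mem_iUnion₂.1 ((hUsub hg).1 g.2)
    exact mem_iUnion.2 ⟨⟨a, ha⟩, hg, hgV⟩

theorem MultimapGraph.isCoveringMap_fst [T2Space Y] (hlsc : LowerSemicontinuousMultimap f)
    (husc : UpperSemicontinuousMultimap f) (hfin : ∀ x, (f x).Finite) {n : ℕ}
    (hcard : ∀ x, (f x).ncard = n) : IsCoveringMap (MultimapGraph.fst f) := fun x =>
  (isEvenlyCovered_fst hlsc husc hfin hcard x).to_isEvenlyCovered_preimage

end

theorem graph_projection_isCoveringMap_general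
    {X Y : Type*} [MetricSpace X] [MetricSpace Y] (n : ℕ)
    (f : X → Set Y)
    (hlsc : LowerSemicontinuousMultimap f) (husc : UpperSemicontinuousMultimap f)
    (hfin : ∀ x, (f x).Finite) (hcard : ∀ x, (f x).ncard = n) :
    IsCoveringMap (fun g : {p : X × Y // p.2 ∈ f p.1} => g.1.1) ∧
      ∀ x : X, ((fun g : {p : X × Y // p.2 ∈ f p.1} => g.1.1) ⁻¹' {x}).ncard = n :=
  ⟨MultimapGraph.isCoveringMap_fst hlsc husc hfin hcard,
    fun x => (MultimapGraph.ncard_fst_preimage_singleton x).trans (hcard x)⟩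

/-- Theorem: if `f : X → Set Y` is an exactly `n`-valued lower and upper
semicontinuous map between metric spaces, then the projection
`p : Γ → X`, `p(x,y) = x`, from the graph
`Γ = {(x,y) | y ∈ f(x)}` (with the subspace topology of the product) is a
covering map, and each fiber `p⁻¹(x)` has cardinality `n`. -/
theorem graph_projection_isCoveringMap
    {X Y : Type*} [MetricSpace X] [MetricSpace Y] (n : ℕ) (hn : 0 < n)
    (f : X → Set Y)
    (hlsc : LowerSemicontinuousMultimap f) (husc : UpperSemicontinuousMultimap f)
    (hfin : ∀ x, (f x).Finite) (hcard : ∀ x, (f x).ncard = n) :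
    IsCoveringMap (fun g : {p : X × Y // p.2 ∈ f p.1} => g.1.1) ∧
      ∀ x : X, ((fun g : {p : X × Y // p.2 ∈ f p.1} => g.1.1) ⁻¹' {x}).ncard = n :=
  graph_projection_isCoveringMap_general n f hlsc husc hfin hcard
end

section
/- Let ℝP² be the quotient of the unit sphere S² ⊆ ℝ³ by the antipodal identification, with quotient map [·], and let f : ℝP² → Set S² be the at-most-2-valued map f([(x,y,z)]) = {(x,y,|z|), (−x,−y,|z|)}. Then f is not a union of equicardinal maps: (a) f is not exactly 2-valued (there exist points whose image has cardinality 1), and (b) there do not exist continuous single-valued maps g, h : ℝP² → S² with g(ξ) ∪ h(ξ) = f(ξ) for all ξ ∈ ℝP². Hence the class of at-most-n-valued maps realized by Crabb's n-fold maps strictly contains the class realized by unions of equicardinal maps. -/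
open Set Topology

noncomputable section

/-- Euclidean 3-space. -/
abbrev E3 : Type := EuclideanSpace ℝ (Fin 3)

/-- The unit 2-sphere in `ℝ³`. -/
abbrev Sph2 : Type := Metric.sphere (0 : E3) 1

/-- The real projective plane: the quotient of the unit sphere `S² ⊆ ℝ³` by the
antipodal identification (as a quotient of the relation `a ~ -a`, with the
quotient topology). -/
abbrev RP2 : Type := Quot (fun a b : Sph2 => (a : E3) = -(b : E3))

/-- The map `(x,y,z) ↦ (x,y,|z|)` on `ℝ³`. -/
def absLast (v : E3) : E3 := WithLp.toLp 2 (fun i => if i = 2 then |v 2| else v i)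


/-!
Along the equator `t ↦ (cos t, sin t, 0)` the two values of `f` are `±(cos t, sin t, 0)`, so a
continuous selection `g` of `f` gives a continuous function `s t = ⟪g [γ t], γ t⟫` with values
`±1`. Since `γ π = -γ 0` and `[γ π] = [γ 0]`, we get `s π = -s 0`, and the intermediate value
theorem produces a zero of `s`, which is impossible. At the north pole both values of `f` coincide.
-/

lemma exists_eq_zero_of_apply_eq_neg {X : Type*} [TopologicalSpace X] [PreconnectedSpace X]
    {s : X → ℝ} (hs : Continuous s) {a b : X} (hab : s b = -s a) : ∃ x, s x = 0 := by
  rcases le_total 0 (s a) with ha | ha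
  · exact intermediate_value_univ b a hs ⟨by linarith, ha⟩
  · exact intermediate_value_univ a b hs ⟨ha, by linarith⟩

lemma false_of_continuous_sign_choice {X F : Type*} [TopologicalSpace X] [PreconnectedSpace X]
    [NormedAddCommGroup F] [InnerProductSpace ℝ F] {γ ψ : X → F} (hγ : Continuous γ)
    (hψ : Continuous ψ) (hγ₀ : ∀ x, γ x ≠ 0) (hsign : ∀ x, ψ x = γ x ∨ ψ x = -γ x) {a b : X}
    (hγab : γ b = -γ a) (hψab : ψ b = ψ a) : False := by
  obtain ⟨x, hx⟩ := exists_eq_zero_of_apply_eq_neg (hψ.inner hγ) (a := a) (b := b)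
    (by simp only [hγab, hψab, inner_neg_right])
  have hγx : 0 < ‖γ x‖ ^ 2 := pow_pos (norm_pos_iff.2 (hγ₀ x)) 2
  rcases hsign x with h | h <;>
    simp only [h, inner_neg_left, real_inner_self_eq_norm_sq, neg_eq_zero] at hx <;> linarith

lemma absLast_of_nonneg {v : E3} (hv : 0 ≤ v 2) : absLast v = v := by
  ext i
  by_cases hi : i = 2
  · subst hi; simp [absLast, abs_of_nonneg hv]
  · simp [absLast, hi]

def equator (t : ℝ) : Sph2 :=
  ⟨WithLp.toLp 2 ![Real.cos t, Real.sin t, 0], by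
    simp [EuclideanSpace.norm_eq, Fin.sum_univ_three]⟩

lemma continuous_equator : Continuous equator :=
  Continuous.subtype_mk ((PiLp.continuous_toLp 2 _).comp
    (continuous_pi fun i => by fin_cases i <;> simp <;> fun_prop)) _

lemma equator_pi : (equator Real.pi : E3) = -(equator 0 : E3) := by
  ext i; fin_cases i <;> simp [equator]

def northPole : Sph2 :=
  ⟨WithLp.toLp 2 ![0, 0, 1], by simp [EuclideanSpace.norm_eq, Fin.sum_univ_three]⟩

lemma absLast_neg_northPole : absLast (-(northPole : E3)) = northPole := by
  ext i; fin_cases i <;> simp [absLast, northPole]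

section

variable {f : RP2 → Set Sph2}
  (hf : ∀ v : Sph2, f (Quot.mk _ v) =
    {w : Sph2 | (w : E3) = absLast (v : E3) ∨ (w : E3) = absLast (-(v : E3))})
include hf

lemma apply_northPole : f (Quot.mk _ northPole) = {northPole} := by
  ext w
  simp only [hf, absLast_neg_northPole, absLast_of_nonneg (v := northPole) (by simp [northPole]),
    or_self, mem_ofPred_eq, mem_singleton_iff, Subtype.ext_iff]

lemma not_exists_continuous_selection :
    ¬ ∃ g : RP2 → Sph2, Continuous g ∧ ∀ ξ, g ξ ∈ f ξ := by
  rintro ⟨g, hg, hgf⟩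
  have hsign (t : ℝ) : (g (Quot.mk _ (equator t)) : E3) = equator t ∨
      (g (Quot.mk _ (equator t)) : E3) = -(equator t : E3) := by
    have hmem := hgf (Quot.mk _ (equator t))
    rwa [hf, mem_ofPred_eq, absLast_of_nonneg (by simp [equator]),
      absLast_of_nonneg (by simp [equator])] at hmem
  refine false_of_continuous_sign_choice (continuous_subtype_val.comp continuous_equator)
    (continuous_subtype_val.comp (hg.comp (continuous_quot_mk.comp continuous_equator)))
    (fun t => ne_zero_of_mem_unit_sphere (equator t)) hsign equator_pi ?_
  exact congrArg (fun ξ => (g ξ : E3)) (Quot.sound equator_pi)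

end

/-- Theorem: the at-most-2-valued map `f : ℝP² ⊸ S²`,
`f([(x,y,z)]) = {(x,y,|z|), (−x,−y,|z|)}` (which is `f̄ ∘ p⁻¹` for the standard
double cover `p : S² → ℝP²` and `f̄(x,y,z) = (x,y,|z|)`), is not a union of
equicardinal maps: (a) it is not exactly 2-valued — some value is a singleton —
and (b) it is not the pointwise union of two continuous single-valued maps
`g, h : ℝP² → S²`. -/
theorem nfold_map_not_union_of_equicardinal
    (f : RP2 → Set Sph2)
    (hf : ∀ v : Sph2, f (Quot.mk _ v) =
      {w : Sph2 | (w : E3) = absLast (v : E3) ∨ (w : E3) = absLast (-(v : E3))}) :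
    (∃ ξ : RP2, (f ξ).ncard = 1) ∧
      ¬ ∃ g h : RP2 → Sph2, Continuous g ∧ Continuous h ∧
          ∀ ξ : RP2, ({g ξ} : Set Sph2) ∪ {h ξ} = f ξ := by
  refine ⟨⟨_, by rw [apply_northPole hf, ncard_singleton]⟩, ?_⟩
  rintro ⟨g, h, hg, -, hgh⟩
  exact not_exists_continuous_selection hf
    ⟨g, hg, fun ξ => hgh ξ ▸ mem_union_left _ (mem_singleton _)⟩

end
end

section
/- Let X be a connected metric space, Y a metric space, and let ψ = (n_ψ, w_ψ) be an ℕ-weighted map from X to Y with weighted index n, i.e. Σ_{y∈Y} w_ψ(x,y) = n for all x. Define F : X → SP^n(Y) by sending x to the class [y_1^{k_1}, …, y_m^{k_m}] in which each y_i ∈ n_ψ(x) is repeated k_i = w_ψ(x,y_i) times. Then F is continuous, where SP^n(Y) carries the quotient topology from Y^n; moreover the underlying set of F(x) equals n_ψ(x) for every x. -/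
open Set Topology

/-- The `n`-fold symmetric product of `Y`: the quotient of `Y^n` by the
permutation action of the symmetric group, with the quotient topology. -/
def SymmetricProduct (Y : Type*) (n : ℕ) : Type _ :=
  Quot (fun a b : Fin n → Y => ∃ σ : Equiv.Perm (Fin n), a ∘ σ = b)

/-- The quotient map `Y^n → SP^n(Y)`. -/
def spMk {Y : Type*} {n : ℕ} (a : Fin n → Y) : SymmetricProduct Y n :=
  Quot.mk _ a

instance symmetricProductTopology (Y : Type*) [TopologicalSpace Y] (n : ℕ) :
    TopologicalSpace (SymmetricProduct Y n) :=
  instTopologicalSpaceQuot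

/-!
Near `x`, the finitely many points of `n_ψ(x)` can be enclosed in pairwise far apart balls of a
small radius `ε`. By upper semicontinuity, for `z` near `x` every point of `n_ψ(z)` lies in one of
these balls, and by local constancy of the weight sums each ball around `y ∈ n_ψ(x)` carries total
weight `w_ψ(x, y)` at `z`. Sending each coordinate of a tuple representing `F z` to the centre of
its ball therefore gives a tuple with the same fibre sizes as a tuple representing `F x`, so after
a permutation the two tuples are coordinatewise `ε`-close.
-/

open Filter Metric

lemma exists_perm_apply_eq_of_ncard_fiber_eq {ι Y : Type*} [Finite ι] {f g : ι → Y}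
    (h : ∀ y, {i | f i = y}.ncard = {i | g i = y}.ncard) :
    ∃ σ : Equiv.Perm ι, ∀ i, g (σ i) = f i := by
  have hfiber (y : Y) : Nonempty ({i // f i = y} ≃ {i // g i = y}) :=
    Finite.card_eq.mp (((Nat.card_coe_set_eq _).trans (h y)).trans (Nat.card_coe_set_eq _).symm)
  exact ⟨Equiv.ofFiberEquiv fun y => (hfiber y).some, Equiv.ofFiberEquiv_map _⟩

lemma ncard_preimage_eq_finsum_ncard_fiber {ι Y : Type*} [Finite ι] (b : ι → Y) (U : Set Y) :
    (b ⁻¹' U).ncard = ∑ᶠ y ∈ U, {i | b i = y}.ncard := by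
  have hunion : b ⁻¹' U = ⋃ y ∈ U ∩ range b, {i | b i = y} := by
    ext i
    simp
  have hdisj : (U ∩ range b).PairwiseDisjoint fun y => {i | b i = y} :=
    fun _ _ _ _ hne => disjoint_left.2 fun _ h h' => hne (h.symm.trans h')
  rw [hunion, ((finite_range b).inter_of_right U).ncard_biUnion (fun _ _ => toFinite _) hdisj]
  refine finsum_mem_inter_support_eq' _ _ _ fun y hy => ⟨And.left, fun hyU => ⟨hyU, ?_⟩⟩
  obtain ⟨i, rfl⟩ := nonempty_of_ncard_ne_zero hy
  exact mem_range_self i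

lemma Set.Finite.eventually_pairwise_two_mul_le_dist {Y : Type*} [MetricSpace Y] {S : Set Y} (hS : S.Finite) :
    ∀ᶠ ε in 𝓝 (0 : ℝ), S.Pairwise fun y y' => 2 * ε ≤ dist y y' := by
  refine (eventually_all_finite hS).2 fun y _ => (eventually_all_finite hS).2 fun y' _ => ?_
  by_cases hyy' : y = y'
  · exact Eventually.of_forall fun _ hne => absurd hyy' hne
  filter_upwards [eventually_lt_nhds (half_pos (dist_pos.2 hyy'))] with ε hε _
  linarith

section Separation

variable {Y : Type*} [PseudoMetricSpace Y]

lemma Set.Pairwise.eq_of_dist_lt {S : Set Y} {ε : ℝ}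
    (hsep : S.Pairwise fun y y' => 2 * ε ≤ dist y y') {y y' : Y} (hy : y ∈ S) (hy' : y' ∈ S)
    (h : dist y y' < 2 * ε) : y = y' :=
  by_contra fun hne => (hsep hy hy' hne).not_gt h

lemma exists_perm_dist_lt_of_ncard_preimage_ball {ι : Type*} [Finite ι] {a b : ι → Y} {ε : ℝ}
    (hsep : (range a).Pairwise fun y y' => 2 * ε ≤ dist y y')
    (hcover : ∀ i, ∃ j, dist (b i) (a j) < ε)
    (hcount : ∀ j, (b ⁻¹' ball (a j) ε).ncard = {i | a i = a j}.ncard) :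
    ∃ σ : Equiv.Perm ι, ∀ i, dist (b (σ i)) (a i) < ε := by
  choose c hc using hcover
  have hfiber (y : Y) : {i | a i = y}.ncard = {i | a (c i) = y}.ncard := by
    by_cases hy : y ∈ range a
    · obtain ⟨j, rfl⟩ := hy
      rw [← hcount j]
      congr 1
      ext i
      refine ⟨fun hi => hsep.eq_of_dist_lt (mem_range_self _) (mem_range_self _) ?_,
        fun hi => mem_ball.2 (hi ▸ hc i)⟩
      linarith [dist_triangle_left (a (c i)) (a j) (b i), mem_ball.1 hi, hc i]
    · have hempty (d : ι → ι) : {i | a (d i) = y} = ∅ :=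
        eq_empty_of_forall_notMem fun i hi => hy ⟨d i, hi⟩
      rw [show {i | a i = y} = ∅ from hempty id, hempty c]
  obtain ⟨σ, hσ⟩ := exists_perm_apply_eq_of_ncard_fiber_eq hfiber
  exact ⟨σ, fun i => hσ i ▸ hc (σ i)⟩

end Separation

namespace NWeightedMap

variable {X Y : Type*} [TopologicalSpace X] [TopologicalSpace Y] (ψ : NWeightedMap X Y)

lemma support_weight (x : X) : Function.support (ψ.weight x) = ψ.toFun x :=
  Subset.antisymm (fun y hy => by_contra fun h => hy (ψ.weight_eq_zero x y h))
    fun y hy => (ψ.weight_pos x y hy).ne'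

lemma range_eq_toFun {ι : Type*} [Finite ι] {x : X} {a : ι → Y}
    (ha : ∀ y, {i | a i = y}.ncard = ψ.weight x y) : range a = ψ.toFun x := by
  ext y
  rw [← ψ.support_weight x, Function.mem_support, ← ha y]
  exact ⟨fun ⟨i, hi⟩ => ncard_ne_zero_of_mem hi, nonempty_of_ncard_ne_zero⟩

lemma eventually_toFun_subset {x : X} {U : Set Y} (hU : IsOpen U) (hx : ψ.toFun x ⊆ U) :
    ∀ᶠ z in 𝓝 x, ψ.toFun z ⊆ U :=
  (ψ.usc U hU).mem_nhds hx

lemma eventually_finsum_weight_eq {x : X} {U : Set Y} (hU : IsOpen U)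
    (hx : ψ.toFun x ∩ frontier U = ∅) :
    ∀ᶠ z in 𝓝 x, ∑ᶠ y ∈ U, ψ.weight z y = ∑ᶠ y ∈ U, ψ.weight x y := by
  obtain ⟨V, hV, hxV, hsum⟩ := ψ.sum_locally_const U hU x hx
  filter_upwards [hV.mem_nhds hxV] with z hz using (hsum z hz).symm

lemma finsum_weight_eq_of_inter_eq_singleton {x : X} {U : Set Y} {y : Y}
    (h : U ∩ ψ.toFun x = {y}) : ∑ᶠ w ∈ U, ψ.weight x w = ψ.weight x y := by
  have hy : y ∈ ψ.toFun x := (h.symm ▸ mem_singleton y : y ∈ U ∩ ψ.toFun x).2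
  rw [finsum_mem_inter_support_eq _ U {y} (by rw [support_weight, h, singleton_inter_of_mem hy]),
    finsum_mem_singleton]

end NWeightedMap

section SymmetricProduct

variable {Y : Type*} {n : ℕ}

lemma spMk_comp_perm (b : Fin n → Y) (σ : Equiv.Perm (Fin n)) : spMk (b ∘ σ) = spMk b :=
  (Quot.sound ⟨σ, rfl⟩).symm

lemma tendsto_nhds_spMk [PseudoMetricSpace Y] {α : Type*} {l : Filter α}
    {F : α → SymmetricProduct Y n} {a : Fin n → Y}
    (h : ∀ ε > 0, ∀ᶠ z in l, ∃ b : Fin n → Y, F z = spMk b ∧ ∀ i, dist (b i) (a i) < ε) :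
    Tendsto F l (𝓝 (spMk a)) := by
  intro W hW
  refine mem_map.2 ?_
  have hpre : spMk ⁻¹' W ∈ 𝓝 a := continuous_quot_mk.continuousAt.preimage_mem_nhds hW
  obtain ⟨ε, hε, hball⟩ := Metric.mem_nhds_iff.1 hpre
  filter_upwards [h ε hε] with z ⟨b, hFz, hb⟩
  rw [mem_preimage, hFz]
  exact hball ((dist_pi_lt_iff hε).2 hb)

end SymmetricProduct

namespace NWeightedMap

variable {X Y : Type*} [TopologicalSpace X] [MetricSpace Y] (ψ : NWeightedMap X Y)

lemma eventually_finsum_weight_ball_eq {x : X} {ε : ℝ} (hε : 0 < ε)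
    (hsep : (ψ.toFun x).Pairwise fun y y' => 2 * ε ≤ dist y y') {y : Y} (hy : y ∈ ψ.toFun x) :
    ∀ᶠ z in 𝓝 x, ∑ᶠ w ∈ ball y ε, ψ.weight z w = ψ.weight x y := by
  have hfrontier : ψ.toFun x ∩ frontier (ball y ε) = ∅ := by
    refine eq_empty_of_forall_notMem fun w ⟨hw, hwf⟩ => ?_
    have hdist : dist w y = ε := frontier_ball_subset_sphere hwf
    have hwy : w = y := hsep.eq_of_dist_lt hw hy (by linarith)
    subst hwy
    exact hε.ne' (hdist.symm.trans (dist_self w))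
  have hball : ball y ε ∩ ψ.toFun x = {y} :=
    Subset.antisymm (fun w ⟨hwb, hw⟩ => hsep.eq_of_dist_lt hw hy (by linarith [mem_ball.1 hwb]))
      (singleton_subset_iff.2 ⟨mem_ball_self hε, hy⟩)
  filter_upwards [ψ.eventually_finsum_weight_eq isOpen_ball hfrontier] with z hz
  rw [hz, ψ.finsum_weight_eq_of_inter_eq_singleton hball]

theorem continuous_of_ncard_fiber_eq_weight {n : ℕ} {F : X → SymmetricProduct Y n}
    (hF : ∀ x, ∃ a : Fin n → Y, F x = spMk a ∧ ∀ y, {i | a i = y}.ncard = ψ.weight x y) :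
    Continuous F := by
  refine continuous_iff_continuousAt.2 fun x => ?_
  obtain ⟨a, hFx, ha⟩ := hF x
  have hrange : range a = ψ.toFun x := ψ.range_eq_toFun ha
  rw [ContinuousAt, hFx]
  refine tendsto_nhds_spMk fun ε₀ hε₀ => ?_
  obtain ⟨ε, hsep, hε, hεε₀⟩ := (((finite_range a).eventually_pairwise_two_mul_le_dist.filter_mono
    nhdsWithin_le_nhds).and (Ioo_mem_nhdsGT hε₀)).exists
  have hcovered : ∀ᶠ z in 𝓝 x, ψ.toFun z ⊆ ⋃ j, ball (a j) ε :=
    ψ.eventually_toFun_subset (isOpen_iUnion fun _ => isOpen_ball)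
      (hrange ▸ range_subset_iff.2 fun j => mem_iUnion.2 ⟨j, mem_ball_self hε⟩)
  have hweight : ∀ᶠ z in 𝓝 x, ∀ j, ∑ᶠ w ∈ ball (a j) ε, ψ.weight z w = ψ.weight x (a j) :=
    eventually_all.2 fun j =>
      ψ.eventually_finsum_weight_ball_eq hε (hrange ▸ hsep) (hrange ▸ mem_range_self j)
  filter_upwards [hcovered, hweight] with z hz hzw
  obtain ⟨b, hFz, hb⟩ := hF z
  have hcover (i : Fin n) : ∃ j, dist (b i) (a j) < ε := by
    obtain ⟨j, hj⟩ := mem_iUnion.1 (hz (ψ.range_eq_toFun hb ▸ mem_range_self i))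
    exact ⟨j, hj⟩
  have hcount (j : Fin n) : (b ⁻¹' ball (a j) ε).ncard = {i | a i = a j}.ncard := by
    rw [ncard_preimage_eq_finsum_ncard_fiber, finsum_mem_congr rfl fun y _ => hb y, hzw j, ha]
  obtain ⟨σ, hσ⟩ := exists_perm_dist_lt_of_ncard_preimage_ball hsep hcover hcount
  exact ⟨b ∘ σ, hFz.trans (spMk_comp_perm b σ).symm, fun i => (hσ i).trans hεε₀⟩

end NWeightedMap

theorem weightedMap_gives_continuous_symmetricProduct_map_general
    {X Y : Type*} [MetricSpace X] [MetricSpace Y]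
    (n : ℕ) (ψ : NWeightedMap X Y)
    (F : X → SymmetricProduct Y n)
    (hF : ∀ x : X, ∃ a : Fin n → Y, F x = spMk a ∧
      ∀ y : Y, ({i : Fin n | a i = y}).ncard = ψ.weight x y) :
    Continuous F ∧
      ∀ x : X, ∃ a : Fin n → Y, F x = spMk a ∧ Set.range a = ψ.toFun x := by
  refine ⟨ψ.continuous_of_ncard_fiber_eq_weight hF, fun x => ?_⟩
  obtain ⟨a, hFx, ha⟩ := hF x
  exact ⟨a, hFx, ψ.range_eq_toFun ha⟩

/-- Theorem: let `ψ` be an `ℕ`-weighted map from a connected metric space `X`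
to a metric space `Y` with weighted index `n` (the total weight at each point
is `n`).  Then the map `F : X → SP^n(Y)` sending `x` to the unordered `n`-tuple
in which each `y ∈ n_ψ(x)` is repeated `w_ψ(x,y)` times is continuous, and the
underlying set of `F(x)` equals `n_ψ(x)` for every `x`. -/
theorem weightedMap_gives_continuous_symmetricProduct_map
    {X Y : Type*} [MetricSpace X] [MetricSpace Y] [ConnectedSpace X]
    (n : ℕ) (hn : 0 < n) (ψ : NWeightedMap X Y)
    (hindex : ∀ x : X, ∑ᶠ y : Y, ψ.weight x y = n)
    (F : X → SymmetricProduct Y n)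
    (hF : ∀ x : X, ∃ a : Fin n → Y, F x = spMk a ∧
      ∀ y : Y, ({i : Fin n | a i = y}).ncard = ψ.weight x y) :
    Continuous F ∧
      ∀ x : X, ∃ a : Fin n → Y, F x = spMk a ∧ Set.range a = ψ.toFun x :=
  weightedMap_gives_continuous_symmetricProduct_map_general n ψ F hF
end

section
/- Let X be a connected metric space, Y a metric space, n a positive integer, and let F : X → SP^n(Y) be continuous, where SP^n(Y) is the n-fold symmetric product of Y with the quotient topology. Define n_φ(x) to be the underlying set of F(x) and w_φ(x,y) to be the multiplicity with which y occurs in F(x) (and 0 if y does not occur). Then (n_φ, w_φ) is an ℕ-weighted map from X to Y: n_φ is upper semicontinuous with finite values, w_φ(x,y) = 0 for y ∉ n_φ(x), w_φ(x,y) > 0 for y ∈ n_φ(x), and for every open U ⊆ Y and x ∈ X with n_φ(x) ∩ ∂U = ∅ there is a neighborhood V of x with Σ_{y∈U} w_φ(x,y) = Σ_{y∈U} w_φ(z,y) for all z ∈ V. -/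
open Set Topology

/-! A point `[a₁, …, aₙ]` of `SP^n(Y)` has support `range a`, and the number of its points in
`U`, counted with multiplicity, is `#(a⁻¹' U)`; both are permutation invariant and so descend to
`SP^n(Y)`, where openness is tested on preimages in `Yⁿ`. Moving `a` slightly keeps every
coordinate inside an open `V` containing it, and keeps every coordinate off `∂U` on its side of
`∂U`. Hence `{q | supp q ⊆ V}` is open and the count in `U` is locally constant on
configurations avoiding `∂U`; composing with the continuous `F` gives the weighted-map axioms. -/

theorem Set.finsum_mem_ncard_preimage_singleton {ι α : Type*} [Finite ι] (a : ι → α)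
    (U : Set α) : ∑ᶠ y ∈ U, (a ⁻¹' {y}).ncard = (a ⁻¹' U).ncard := by
  have hfiber : a ⁻¹' U = ⋃ y ∈ U ∩ range a, a ⁻¹' {y} := by ext; simp
  have hsupport : (Function.support fun y => (a ⁻¹' {y}).ncard) = range a := by
    ext y
    rw [Function.mem_support, Ne, ncard_eq_zero (toFinite _), preimage_singleton_eq_empty,
      not_not]
  rw [hfiber, ((finite_range a).inter_of_right U).ncard_biUnion (fun _ _ => toFinite _)
    (pairwiseDisjoint_fiber a _), ← hsupport, finsum_mem_inter_support]

theorem eventually_mem_iff_of_notMem_frontier {X : Type*} [TopologicalSpace X] {s : Set X}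
    {x : X} (h : x ∉ frontier s) : ∀ᶠ y in 𝓝 x, y ∈ s ↔ x ∈ s := by
  rw [← mem_compl_iff, compl_frontier_eq_union_interior] at h
  rcases h with h | h
  · filter_upwards [mem_interior_iff_mem_nhds.mp h] with y hy
    exact iff_of_true hy (interior_subset h)
  · filter_upwards [mem_interior_iff_mem_nhds.mp h] with y hy
    exact iff_of_false hy (interior_subset h)

namespace SymmetricProduct

variable {Y : Type*} {n : ℕ}

def support : SymmetricProduct Y n → Set Y :=
  Quot.lift Set.range (by rintro a - ⟨σ, rfl⟩; exact (σ.surjective.range_comp a).symm)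

noncomputable def count (U : Set Y) : SymmetricProduct Y n → ℕ :=
  Quot.lift (fun a => (a ⁻¹' U).ncard) (by
    rintro a - ⟨σ, rfl⟩
    exact (ncard_preimage_of_injective_subset_range σ.injective (by simp)).symm)

@[simp]
theorem support_spMk (a : Fin n → Y) : (spMk a).support = range a := rfl

@[simp]
theorem count_spMk (U : Set Y) (a : Fin n → Y) : (spMk a).count U = (a ⁻¹' U).ncard := rfl

variable [TopologicalSpace Y]

theorem isOpen_setOf_support_subset {V : Set Y} (hV : IsOpen V) :
    IsOpen {q : SymmetricProduct Y n | q.support ⊆ V} := by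
  refine isOpen_coinduced.mpr ?_
  show IsOpen {a : Fin n → Y | range a ⊆ V}
  simp only [range_subset_iff, ofPred_forall]
  exact isOpen_iInter_of_finite fun i => hV.preimage (continuous_apply i)

theorem isOpen_setOf_disjoint_frontier_and_count_eq (U : Set Y) (k : ℕ) :
    IsOpen {q : SymmetricProduct Y n | Disjoint q.support (frontier U) ∧ q.count U = k} := by
  refine isOpen_coinduced.mpr (isOpen_iff_mem_nhds.mpr ?_)
  rintro a ⟨hdisj, rfl⟩
  have ha : ∀ i, a i ∉ frontier U := fun i => hdisj.notMem_of_mem_left (mem_range_self i)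
  have hnear : ∀ᶠ b in 𝓝 a, ∀ i, b i ∉ frontier U ∧ (b i ∈ U ↔ a i ∈ U) :=
    Filter.eventually_all.mpr fun i => (continuous_apply i).continuousAt.eventually <|
      (isClosed_frontier.isOpen_compl.eventually_mem (ha i)).and
        (eventually_mem_iff_of_notMem_frontier (ha i))
  filter_upwards [hnear] with b hb
  refine ⟨disjoint_left.mpr ?_, congrArg ncard (ext fun i => (hb i).2)⟩
  rintro _ ⟨i, rfl⟩
  exact (hb i).1

end SymmetricProduct

open SymmetricProduct

theorem symmetricProduct_map_gives_weightedMap_general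
    {X Y : Type*} [MetricSpace X] [MetricSpace Y]
    (n : ℕ)
    (F : X → SymmetricProduct Y n) (hFcont : Continuous F)
    (nφ : X → Set Y) (wφ : X → Y → ℕ)
    (hdef : ∀ x : X, ∃ a : Fin n → Y, F x = spMk a ∧ nφ x = Set.range a ∧
      ∀ y : Y, wφ x y = ({i : Fin n | a i = y}).ncard) :
    (∀ V : Set Y, IsOpen V → IsOpen {x | nφ x ⊆ V}) ∧
      (∀ x, (nφ x).Finite) ∧
      (∀ x y, y ∉ nφ x → wφ x y = 0) ∧
      (∀ x y, y ∈ nφ x → 0 < wφ x y) ∧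
      (∀ U : Set Y, IsOpen U → ∀ x : X, nφ x ∩ frontier U = ∅ →
        ∃ V : Set X, IsOpen V ∧ x ∈ V ∧
          ∀ z ∈ V, ∑ᶠ y ∈ U, wφ x y = ∑ᶠ y ∈ U, wφ z y) := by
  choose a hFa hnφ hwφ using hdef
  have hsupport : ∀ x, nφ x = (F x).support := fun x => by rw [hFa, support_spMk, hnφ]
  have hweight : ∀ x U, ∑ᶠ y ∈ U, wφ x y = (F x).count U := fun x U => by
    simp only [hwφ x, hFa x, count_spMk]
    exact finsum_mem_ncard_preimage_singleton (a x) U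
  refine ⟨fun V hV => ?_, fun x => ?_, fun x y hy => ?_, fun x y hy => ?_, fun U _ x hx => ?_⟩
  · simp only [hsupport]
    exact (isOpen_setOf_support_subset hV).preimage hFcont
  · rw [hnφ]
    exact finite_range _
  · rw [hnφ] at hy
    rw [hwφ, ncard_eq_zero (toFinite _)]
    exact preimage_singleton_eq_empty.mpr hy
  · rw [hnφ] at hy
    rw [hwφ]
    exact (ncard_pos (toFinite _)).mpr (preimage_singleton_nonempty.mpr hy)
  · refine ⟨F ⁻¹' {q | Disjoint q.support (frontier U) ∧ q.count U = (F x).count U},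
      (isOpen_setOf_disjoint_frontier_and_count_eq U _).preimage hFcont,
      ⟨by rw [← hsupport]; exact disjoint_iff_inter_eq_empty.mpr hx, rfl⟩, fun z hz => ?_⟩
    rw [hweight, hweight, hz.2]

/-- Theorem: let `F : X → SP^n(Y)` be a continuous map from a connected metric
space into the `n`-fold symmetric product of a metric space `Y` (with the
quotient topology).  Let `n_φ(x)` be the underlying set of `F(x)` and let
`w_φ(x,y)` be the multiplicity with which `y` occurs in `F(x)`.  Then
`(n_φ, w_φ)` is an `ℕ`-weighted map from `X` to `Y`: `n_φ` is upper
semicontinuous with finite values, `w_φ` vanishes off the graph of `n_φ`, is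
strictly positive on it, and satisfies the local weight-sum condition. -/
theorem symmetricProduct_map_gives_weightedMap
    {X Y : Type*} [MetricSpace X] [MetricSpace Y] [ConnectedSpace X]
    (n : ℕ) (hn : 0 < n)
    (F : X → SymmetricProduct Y n) (hFcont : Continuous F)
    (nφ : X → Set Y) (wφ : X → Y → ℕ)
    (hdef : ∀ x : X, ∃ a : Fin n → Y, F x = spMk a ∧ nφ x = Set.range a ∧
      ∀ y : Y, wφ x y = ({i : Fin n | a i = y}).ncard) :
    (∀ V : Set Y, IsOpen V → IsOpen {x | nφ x ⊆ V}) ∧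
      (∀ x, (nφ x).Finite) ∧
      (∀ x y, y ∉ nφ x → wφ x y = 0) ∧
      (∀ x y, y ∈ nφ x → 0 < wφ x y) ∧
      (∀ U : Set Y, IsOpen U → ∀ x : X, nφ x ∩ frontier U = ∅ →
        ∃ V : Set X, IsOpen V ∧ x ∈ V ∧
          ∀ z ∈ V, ∑ᶠ y ∈ U, wφ x y = ∑ᶠ y ∈ U, wφ z y) :=
  symmetricProduct_map_gives_weightedMap_general n F hFcont nφ wφ hdef
end

section
/- Let X and Y be metric spaces and n a positive integer. Let f : X → Set Y be lower and upper semicontinuous with the cardinality of f(x) equal to either 1 or n for every x ∈ X (a {1,n}-valued map). Then there exists a continuous map g : X → SP^n(Y), where SP^n(Y) is the n-fold symmetric product with the quotient topology, such that for every x ∈ X the underlying set of g(x) equals f(x). That is, every {1,n}-valued map is realized by a symmetric product map. -/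
open Set Topology

/-!
A point of `SP^n(Y)` is an enumeration `Fin n → Y` up to permutation, and an enumeration of a set
with `1` or `n` elements is unique up to permutation, so `g x` is determined by `f x`. Continuity
at `x₀` means that near `x₀` the set `f x` has an enumeration close to one of `f x₀`. If `f x₀` is a
point, upper semicontinuity keeps all of `f x` near it. If `f x₀` has `n` points, lower
semicontinuity makes `f x` meet `n` pairwise disjoint neighbourhoods of them; since `f x` has at
most `n` points, one point from each neighbourhood enumerates it.
-/

section SymmetricProduct

variable {Y : Type*} {n : ℕ}

lemma injective_of_ncard_range_eq {a : Fin n → Y} (h : (range a).ncard = n) :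
    Function.Injective a := by
  have hbij := (rangeFactorization_surjective (f := a)).bijective_of_nat_card_le
    (by rw [Nat.card_coe_set_eq, h, Nat.card_fin])
  exact fun i j hij => hbij.1 (Subtype.ext hij)

lemma exists_range_eq_of_ncard_eq (hn : 0 < n) {S : Set Y} (h : S.ncard = 1 ∨ S.ncard = n) :
    ∃ a : Fin n → Y, range a = S := by
  rcases h with h1 | hN
  · obtain ⟨y, rfl⟩ := ncard_eq_one.mp h1
    have : Nonempty (Fin n) := Fin.pos_iff_nonempty.mp hn
    exact ⟨fun _ => y, range_const⟩
  · have : Finite S := finite_of_ncard_pos (hN ▸ hn)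
    let e : S ≃ Fin n := Finite.equivFinOfCardEq (by rw [Nat.card_coe_set_eq, hN])
    exact ⟨Subtype.val ∘ e.symm, by rw [e.symm.surjective.range_comp, Subtype.range_coe]⟩

lemma spMk_eq_spMk_of_range_eq {a b : Fin n → Y} (hab : range a = range b)
    (h : (range a).ncard = 1 ∨ (range a).ncard = n) : spMk a = spMk b := by
  rcases h with h1 | hN
  · obtain ⟨y, hy⟩ := ncard_eq_one.mp h1
    have ha : a = Function.const _ y := range_subset_singleton.mp hy.subset
    have hb : b = Function.const _ y := range_subset_singleton.mp (hab ▸ hy).subset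
    rw [ha, hb]
  · have ha := injective_of_ncard_range_eq hN
    have hb := injective_of_ncard_range_eq (hab ▸ hN)
    refine Quot.sound ⟨(Equiv.ofInjective b hb).trans
      ((Equiv.setCongr hab.symm).trans (Equiv.ofInjective a ha).symm), funext fun i => ?_⟩
    simp [Equiv.apply_ofInjective_symm]

variable [TopologicalSpace Y]

lemma continuous_spMk : Continuous (spMk : (Fin n → Y) → SymmetricProduct Y n) :=
  continuous_quot_mk

lemma continuousAt_spMk_comp {X : Type*} [TopologicalSpace X] {a : X → Fin n → Y} {x₀ : X}
    (h : ∀ V : Fin n → Set Y, (∀ i, IsOpen (V i) ∧ a x₀ i ∈ V i) →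
      ∀ᶠ x in 𝓝 x₀, ∃ c ∈ univ.pi V, spMk c = spMk (a x)) :
    ContinuousAt (fun x => spMk (a x)) x₀ := by
  rw [ContinuousAt, tendsto_nhds]
  intro O hO hx₀
  obtain ⟨V, hV, hVO⟩ := isOpen_pi_iff'.mp (hO.preimage continuous_spMk) (a x₀) hx₀
  filter_upwards [h V hV] with x ⟨c, hc, hcx⟩
  show spMk (a x) ∈ O
  exact hcx ▸ hVO hc

end SymmetricProduct

section Multimap

variable {X Y : Type*} [TopologicalSpace X] [TopologicalSpace Y] {n : ℕ} {f : X → Set Y}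
  {x₀ : X} {V : Fin n → Set Y}

lemma UpperSemicontinuousMultimap.eventually_mem_pi_of_ncard_eq_one
    (husc : UpperSemicontinuousMultimap f) {A : X → Fin n → Y} (hA : ∀ x, range (A x) = f x)
    (h1 : (f x₀).ncard = 1) (hV : ∀ i, IsOpen (V i) ∧ A x₀ i ∈ V i) :
    ∀ᶠ x in 𝓝 x₀, A x ∈ univ.pi V := by
  obtain ⟨y, hy⟩ := ncard_eq_one.mp h1
  have hA₀ : A x₀ = Function.const _ y := range_subset_singleton.mp (hA x₀ ▸ hy).subset
  have hsub : f x₀ ⊆ ⋂ i, V i := by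
    rw [hy, singleton_subset_iff, mem_iInter]
    exact fun i => by simpa [hA₀] using (hV i).2
  filter_upwards [(husc _ (isOpen_iInter_of_finite fun i => (hV i).1)).mem_nhds hsub]
    with x hx i _
  exact mem_iInter.mp (hx (hA x ▸ mem_range_self i)) i

lemma LowerSemicontinuousMultimap.eventually_exists_mem_pi_range_eq_of_ncard_eq [T2Space Y]
    (hn : 0 < n) (hlsc : LowerSemicontinuousMultimap f)
    (hcard : ∀ x, (f x).ncard = 1 ∨ (f x).ncard = n) {a₀ : Fin n → Y} (ha₀ : range a₀ = f x₀)
    (hN : (f x₀).ncard = n) (hV : ∀ i, IsOpen (V i) ∧ a₀ i ∈ V i) :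
    ∀ᶠ x in 𝓝 x₀, ∃ c ∈ univ.pi V, range c = f x := by
  have ha₀_inj := injective_of_ncard_range_eq (ha₀ ▸ hN)
  obtain ⟨W, hW, hWdisj⟩ := (finite_range a₀).t2_separation
  have hmeet : ∀ᶠ x in 𝓝 x₀, ∀ i, (f x ∩ (V i ∩ W (a₀ i))).Nonempty :=
    Filter.eventually_all.mpr fun i => (hlsc _ ((hV i).1.inter (hW _).2)).mem_nhds
      ⟨a₀ i, ha₀ ▸ mem_range_self i, (hV i).2, (hW _).1⟩
  filter_upwards [hmeet] with x hx
  choose c hcf hcV hcW using hx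
  have hc_inj : Function.Injective c := fun i j hij =>
    ha₀_inj (hWdisj.elim_set (mem_range_self i) (mem_range_self j) (c i) (hcW i) (hij ▸ hcW j))
  have hfx : 0 < (f x).ncard ∧ (f x).ncard ≤ n := by rcases hcard x with h | h <;> omega
  refine ⟨c, fun i _ => hcV i, eq_of_subset_of_ncard_le (range_subset_iff.mpr hcf) ?_
    (finite_of_ncard_pos hfx.1)⟩
  rw [ncard_range_of_injective hc_inj, Nat.card_fin]
  exact hfx.2

end Multimap

theorem one_n_valued_realized_by_symmetricProduct_general
    {X Y : Type*} [MetricSpace X] [MetricSpace Y] (n : ℕ) (hn : 0 < n)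
    (f : X → Set Y)
    (hlsc : LowerSemicontinuousMultimap f) (husc : UpperSemicontinuousMultimap f)
    (hcard : ∀ x, (f x).ncard = 1 ∨ (f x).ncard = n) :
    ∃ g : X → SymmetricProduct Y n, Continuous g ∧
      ∀ x : X, ∃ a : Fin n → Y, g x = spMk a ∧ Set.range a = f x := by
  choose A hA using fun x => exists_range_eq_of_ncard_eq hn (hcard x)
  refine ⟨fun x => spMk (A x), continuous_iff_continuousAt.mpr fun x₀ => ?_,
    fun x => ⟨A x, rfl, hA x⟩⟩
  refine continuousAt_spMk_comp fun V hV => ?_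
  rcases hcard x₀ with h1 | hN
  · filter_upwards [husc.eventually_mem_pi_of_ncard_eq_one hA h1 hV] with x hx
    exact ⟨A x, hx, rfl⟩
  · filter_upwards [hlsc.eventually_exists_mem_pi_range_eq_of_ncard_eq hn hcard (hA x₀) hN hV]
      with x ⟨c, hc, hcx⟩
    exact ⟨c, hc, spMk_eq_spMk_of_range_eq (hcx.trans (hA x).symm) (hcx ▸ hcard x)⟩

/-- Theorem: every `{1,n}`-valued map between metric spaces is realized by a
symmetric product map.  If `f : X ⊸ Y` is lower and upper semicontinuous with
every value finite of cardinality `1` or `n`, then there is a continuous map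
`g : X → SP^n(Y)` such that the underlying set of `g(x)` equals `f(x)` for
every `x`. -/
theorem one_n_valued_realized_by_symmetricProduct
    {X Y : Type*} [MetricSpace X] [MetricSpace Y] (n : ℕ) (hn : 0 < n)
    (f : X → Set Y)
    (hlsc : LowerSemicontinuousMultimap f) (husc : UpperSemicontinuousMultimap f)
    (hfin : ∀ x, (f x).Finite)
    (hcard : ∀ x, (f x).ncard = 1 ∨ (f x).ncard = n) :
    ∃ g : X → SymmetricProduct Y n, Continuous g ∧
      ∀ x : X, ∃ a : Fin n → Y, g x = spMk a ∧ Set.range a = f x :=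
  one_n_valued_realized_by_symmetricProduct_general n hn f hlsc husc hcard
end
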